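/- Let L > 0, ω > 0, T > 0, let w : [0, T] → ℝ, and let u : ℝ × [0, T] → ℝ be smooth and L-periodic in x, satisfying (u_t + u u_x)_x = (1/2)u_x² + 2ω u + w(t) everywhere. Then the Hamiltonian H₂(t) = (1/2)∫₀^L ( u(x,t) u_x(x,t)² + 2ω u(x,t)² ) dx satisfies d/dt H₂(t) = −w(t) ∫₀^L u_t(x,t) dx for all t ∈ [0, T]. -/

import Mathlib

/-- Partial derivative in the spatial (first) variable. -/
noncomputable def pdx (u : ℝ → ℝ → ℝ) : ℝ → ℝ → ℝ :=
  fun x t => deriv (fun y => u y t) x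

/-- Partial derivative in the temporal (second) variable. -/
noncomputable def pdt (u : ℝ → ℝ → ℝ) : ℝ → ℝ → ℝ :=
  fun x t => deriv (fun s => u x s) t

open Function

section helpers
variable {u : ℝ → ℝ → ℝ}

lemma hasDerivAt_fst (hu : ContDiff ℝ ((⊤ : ℕ∞) : WithTop ℕ∞) (uncurry u)) (x t : ℝ) :
    HasDerivAt (fun y => u y t) (fderiv ℝ (uncurry u) (x, t) (1, 0)) x := by
  have hd : HasFDerivAt (uncurry u) (fderiv ℝ (uncurry u) (x, t)) (x, t) :=
    (hu.differentiable (by simp)).differentiableAt.hasFDerivAt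
  have hg : HasFDerivAt (fun y : ℝ => (y, t))
      ((ContinuousLinearMap.id ℝ ℝ).prod 0) x :=
    HasFDerivAt.prodMk (hasFDerivAt_id x) (hasFDerivAt_const t x)
  have := (hd.comp x hg).hasDerivAt
  simpa [Function.comp_def] using this

lemma hasDerivAt_snd (hu : ContDiff ℝ ((⊤ : ℕ∞) : WithTop ℕ∞) (uncurry u)) (x t : ℝ) :
    HasDerivAt (fun s => u x s) (fderiv ℝ (uncurry u) (x, t) (0, 1)) t := by
  have hd : HasFDerivAt (uncurry u) (fderiv ℝ (uncurry u) (x, t)) (x, t) :=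
    (hu.differentiable (by simp)).differentiableAt.hasFDerivAt
  have hg : HasFDerivAt (fun s : ℝ => (x, s))
      ((0 : ℝ →L[ℝ] ℝ).prod (ContinuousLinearMap.id ℝ ℝ)) t :=
    HasFDerivAt.prodMk (hasFDerivAt_const x t) (hasFDerivAt_id t)
  have := (hd.comp t hg).hasDerivAt
  simpa [Function.comp_def] using this

lemma pdx_eq (hu : ContDiff ℝ ((⊤ : ℕ∞) : WithTop ℕ∞) (uncurry u)) (x t : ℝ) :
    pdx u x t = fderiv ℝ (uncurry u) (x, t) (1, 0) := (hasDerivAt_fst hu x t).deriv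

lemma pdt_eq (hu : ContDiff ℝ ((⊤ : ℕ∞) : WithTop ℕ∞) (uncurry u)) (x t : ℝ) :
    pdt u x t = fderiv ℝ (uncurry u) (x, t) (0, 1) := (hasDerivAt_snd hu x t).deriv

lemma hasDerivAt_pdx (hu : ContDiff ℝ ((⊤ : ℕ∞) : WithTop ℕ∞) (uncurry u)) (x t : ℝ) :
    HasDerivAt (fun y => u y t) (pdx u x t) x := by
  rw [pdx_eq hu]; exact hasDerivAt_fst hu x t

lemma hasDerivAt_pdt (hu : ContDiff ℝ ((⊤ : ℕ∞) : WithTop ℕ∞) (uncurry u)) (x t : ℝ) :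
    HasDerivAt (fun s => u x s) (pdt u x t) t := by
  rw [pdt_eq hu]; exact hasDerivAt_snd hu x t

lemma contDiff_fderiv (hu : ContDiff ℝ ((⊤ : ℕ∞) : WithTop ℕ∞) (uncurry u)) :
    ContDiff ℝ ((⊤ : ℕ∞) : WithTop ℕ∞) (fderiv ℝ (uncurry u)) :=
  hu.fderiv_right (by exact_mod_cast le_top)

lemma contDiff_pdx (hu : ContDiff ℝ ((⊤ : ℕ∞) : WithTop ℕ∞) (uncurry u)) :
    ContDiff ℝ ((⊤ : ℕ∞) : WithTop ℕ∞) (uncurry (pdx u)) := by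
  have h2 : ContDiff ℝ ((⊤ : ℕ∞) : WithTop ℕ∞) (fun p : ℝ × ℝ => fderiv ℝ (uncurry u) p (1, 0)) :=
    (contDiff_fderiv hu).clm_apply contDiff_const
  have e : uncurry (pdx u) = fun p : ℝ × ℝ => fderiv ℝ (uncurry u) p (1, 0) := by
    funext p; exact pdx_eq hu p.1 p.2
  rw [e]; exact h2

lemma contDiff_pdt (hu : ContDiff ℝ ((⊤ : ℕ∞) : WithTop ℕ∞) (uncurry u)) :
    ContDiff ℝ ((⊤ : ℕ∞) : WithTop ℕ∞) (uncurry (pdt u)) := by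
  have h2 : ContDiff ℝ ((⊤ : ℕ∞) : WithTop ℕ∞) (fun p : ℝ × ℝ => fderiv ℝ (uncurry u) p (0, 1)) :=
    (contDiff_fderiv hu).clm_apply contDiff_const
  have e : uncurry (pdt u) = fun p : ℝ × ℝ => fderiv ℝ (uncurry u) p (0, 1) := by
    funext p; exact pdt_eq hu p.1 p.2
  rw [e]; exact h2

lemma fderiv_uncurry_pdx (hu : ContDiff ℝ ((⊤ : ℕ∞) : WithTop ℕ∞) (uncurry u)) (p : ℝ × ℝ) (v : ℝ × ℝ) :
    fderiv ℝ (uncurry (pdx u)) p v = fderiv ℝ (fderiv ℝ (uncurry u)) p v (1, 0) := by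
  have e : uncurry (pdx u) = fun q : ℝ × ℝ => fderiv ℝ (uncurry u) q (1, 0) := by
    funext q; exact pdx_eq hu q.1 q.2
  rw [e, fderiv_clm_apply
    ((contDiff_fderiv hu).differentiable (by simp)).differentiableAt
    (differentiableAt_const _)]
  simp

lemma fderiv_uncurry_pdt (hu : ContDiff ℝ ((⊤ : ℕ∞) : WithTop ℕ∞) (uncurry u)) (p : ℝ × ℝ) (v : ℝ × ℝ) :
    fderiv ℝ (uncurry (pdt u)) p v = fderiv ℝ (fderiv ℝ (uncurry u)) p v (0, 1) := by
  have e : uncurry (pdt u) = fun q : ℝ × ℝ => fderiv ℝ (uncurry u) q (0, 1) := by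
    funext q; exact pdt_eq hu q.1 q.2
  rw [e, fderiv_clm_apply
    ((contDiff_fderiv hu).differentiable (by simp)).differentiableAt
    (differentiableAt_const _)]
  simp

lemma mixed_partials (hu : ContDiff ℝ ((⊤ : ℕ∞) : WithTop ℕ∞) (uncurry u)) (x t : ℝ) :
    pdt (pdx u) x t = pdx (pdt u) x t := by
  rw [pdt_eq (contDiff_pdx hu), pdx_eq (contDiff_pdt hu),
    fderiv_uncurry_pdx hu, fderiv_uncurry_pdt hu]
  exact (hu.contDiffAt.isSymmSndFDerivAt (by simp [minSmoothness_of_isRCLikeNormedField]; exact WithTop.coe_le_coe.mpr le_top)) _ _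

end helpers

/-- For a smooth, spatially `L`-periodic solution of the rank −1 modified Hunter–Saxton
equation `(u_t + u u_x)_x = ½ u_x² + 2ω u + w(t)`, the Hamiltonian
`H₂(t) = ½∫₀^L (u u_x² + 2ω u²) dx` satisfies `H₂'(t) = −w(t) ∫₀^L u_t dx`. -/
theorem stmt_12 (L ω T : ℝ) (hL : 0 < L) (hω : 0 < ω) (hT : 0 < T)
    (w : ℝ → ℝ)
    (u : ℝ → ℝ → ℝ) (hu : ContDiff ℝ (⊤ : ℕ∞) (Function.uncurry u))
    (hper : ∀ x t, u (x + L) t = u x t)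
    (hpde : ∀ x : ℝ, ∀ t ∈ Set.Icc (0 : ℝ) T,
      pdx (fun y s => pdt u y s + u y s * pdx u y s) x t
        = (1 / 2) * (pdx u x t) ^ 2 + 2 * ω * u x t + w t) :
    ∀ t ∈ Set.Icc (0 : ℝ) T,
      HasDerivAt
        (fun τ => (1 / 2) * ∫ x in (0:ℝ)..L,
          (u x τ * (pdx u x τ) ^ 2 + 2 * ω * (u x τ) ^ 2))
        (-(w t) * ∫ x in (0:ℝ)..L, pdt u x t) t := by
  intro t ht
  have hu' : ContDiff ℝ ((⊤ : ℕ∞) : WithTop ℕ∞) (uncurry u) := hu.of_le (by simp)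
  have hP : ContDiff ℝ ((⊤ : ℕ∞) : WithTop ℕ∞) (uncurry (pdx u)) := contDiff_pdx hu'
  have hQ : ContDiff ℝ ((⊤ : ℕ∞) : WithTop ℕ∞) (uncurry (pdt u)) := contDiff_pdt hu'
  have hPQ : ContDiff ℝ ((⊤ : ℕ∞) : WithTop ℕ∞) (uncurry (pdt (pdx u))) := contDiff_pdt hP
  set F : ℝ → ℝ → ℝ := fun τ x => u x τ * (pdx u x τ) ^ 2 + 2 * ω * (u x τ) ^ 2 with hFdef
  set F' : ℝ → ℝ → ℝ := fun τ x =>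
    pdt u x τ * (pdx u x τ) ^ 2 + u x τ * (2 * pdx u x τ * pdt (pdx u) x τ)
      + 2 * ω * (2 * u x τ * pdt u x τ) with hF'def
  -- differentiability in the parameter
  have hdiff : ∀ (x τ : ℝ), HasDerivAt (fun s => F s x) (F' τ x) τ := by
    intro x τ
    have h1 := hasDerivAt_pdt hu' x τ
    have h2 := hasDerivAt_pdt hP x τ
    have h3 := (h1.mul (h2.pow 2)).add ((h1.pow 2).const_mul (2 * ω))
    convert h3 using 1
    · rfl
    · rfl
    · rfl
    simp only [hF'def, Pi.pow_apply]
    ring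
  -- continuity facts
  have cu : Continuous fun p : ℝ × ℝ => u p.1 p.2 := hu'.continuous
  have cP : Continuous fun p : ℝ × ℝ => pdx u p.1 p.2 := hP.continuous
  have cQ : Continuous fun p : ℝ × ℝ => pdt u p.1 p.2 := hQ.continuous
  have cPQ : Continuous fun p : ℝ × ℝ => pdt (pdx u) p.1 p.2 := hPQ.continuous
  have hcontF' : Continuous fun p : ℝ × ℝ => F' p.2 p.1 := by
    simp only [hF'def]
    exact ((cQ.mul (cP.pow 2)).add
        (cu.mul ((continuous_const.mul cP).mul cPQ))).add
      (continuous_const.mul ((continuous_const.mul cu).mul cQ))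
  have hcontF : Continuous fun p : ℝ × ℝ => F p.2 p.1 := by
    simp only [hFdef]
    exact (cu.mul (cP.pow 2)).add (continuous_const.mul (cu.pow 2))
  have hsliceF : ∀ τ : ℝ, Continuous fun x => F τ x := fun τ =>
    hcontF.comp (continuous_id.prodMk continuous_const)
  have hsliceF' : ∀ τ : ℝ, Continuous fun x => F' τ x := fun τ =>
    hcontF'.comp (continuous_id.prodMk continuous_const)
  have hsliceQ : Continuous fun x => pdt u x t :=
    cQ.comp (continuous_id.prodMk continuous_const)
  -- bound on a compact set
  obtain ⟨C, hC⟩ :=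
    (isCompact_uIcc (a := (0:ℝ)) (b := L)).prod (isCompact_closedBall t 1)
      |>.exists_bound_of_continuousOn hcontF'.continuousOn
  -- differentiation under the integral sign
  have hMain : HasDerivAt (fun τ => ∫ x in (0:ℝ)..L, F τ x)
      (∫ x in (0:ℝ)..L, F' t x) t := by
    have := intervalIntegral.hasDerivAt_integral_of_dominated_loc_of_deriv_le
      (F := F) (F' := F') (x₀ := t) (a := (0:ℝ)) (b := L)
      (bound := fun _ => C) (μ := MeasureTheory.volume) (Metric.ball_mem_nhds t one_pos)
      (Filter.Eventually.of_forall fun τ => (hsliceF τ).aestronglyMeasurable)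
      ((hsliceF t).intervalIntegrable 0 L)
      ((hsliceF' t).aestronglyMeasurable)
      (Filter.Eventually.of_forall fun x hx τ hτ =>
        hC (x, τ) ⟨Set.uIoc_subset_uIcc hx, Metric.ball_subset_closedBall hτ⟩)
      (intervalIntegrable_const)
      (Filter.Eventually.of_forall fun x _ τ _ => hdiff x τ)
    exact this.2
  -- the spatial antiderivative
  set G : ℝ → ℝ := fun y =>
    (pdt u y t + u y t * pdx u y t) ^ 2 - (u y t) ^ 2 * (pdx u y t) ^ 2 with hGdef
  have hG : ∀ y : ℝ, HasDerivAt G (F' t y + 2 * w t * pdt u y t) y := by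
    intro y
    have hu1 : HasDerivAt (fun z => u z t) (pdx u y t) y := hasDerivAt_pdx hu' y t
    have hP1 : HasDerivAt (fun z => pdx u z t) (pdx (pdx u) y t) y := hasDerivAt_pdx hP y t
    have hQ1 : HasDerivAt (fun z => pdt u z t) (pdx (pdt u) y t) y := hasDerivAt_pdx hQ y t
    have hv : HasDerivAt (fun z => pdt u z t + u z t * pdx u z t)
        (pdx (pdt u) y t + (pdx u y t * pdx u y t + u y t * pdx (pdx u) y t)) y :=
      hQ1.add (hu1.mul hP1)
    have e1 := hpde y t ht
    have e2 : pdx (fun y s => pdt u y s + u y s * pdx u y s) y t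
        = pdx (pdt u) y t + (pdx u y t * pdx u y t + u y t * pdx (pdx u) y t) := hv.deriv
    rw [e2] at e1
    have hGd := (hv.pow 2).sub ((hu1.pow 2).mul (hP1.pow 2))
    convert hGd using 1
    · rfl
    · rfl
    · rfl
    have hmix := mixed_partials hu' y t
    simp only [hF'def, Pi.pow_apply]
    rw [hmix]
    linear_combination (-2 * pdt u y t) * e1
  -- fundamental theorem of calculus
  have hcontG' : Continuous fun y => F' t y + 2 * w t * pdt u y t :=
    (hsliceF' t).add (continuous_const.mul hsliceQ)
  have hFTC : ∫ y in (0:ℝ)..L, (F' t y + 2 * w t * pdt u y t) = G L - G 0 :=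
    intervalIntegral.integral_eq_sub_of_hasDerivAt (fun y _ => hG y)
      (hcontG'.intervalIntegrable 0 L)
  -- periodicity kills the boundary terms
  have p1 : u L t = u 0 t := by simpa using hper 0 t
  have p2 : pdx u L t = pdx u 0 t := by
    have h2' := (hasDerivAt_pdx hu' (0 + L) t).comp (0:ℝ)
      ((hasDerivAt_id (0:ℝ)).add_const L)
    simp only [Function.comp_def, id_eq, mul_one, zero_add] at h2'
    have h3 : (fun y : ℝ => u (y + L) t) = fun y => u y t := funext fun y => hper y t
    rw [h3] at h2'
    exact h2'.deriv.symm
  have p3 : pdt u L t = pdt u 0 t := by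
    have h3 : (fun s => u L s) = fun s => u 0 s := funext fun s => by simpa using hper 0 s
    simp only [pdt, h3]
  have hGL : G L - G 0 = 0 := by
    simp only [hGdef, p1, p2, p3]; ring
  have hsplit : ∫ y in (0:ℝ)..L, (F' t y + 2 * w t * pdt u y t)
      = (∫ y in (0:ℝ)..L, F' t y) + 2 * w t * ∫ y in (0:ℝ)..L, pdt u y t := by
    rw [intervalIntegral.integral_add (g := fun y => 2 * w t * pdt u y t) ((hsliceF' t).intervalIntegrable 0 L)
      ((continuous_const.mul hsliceQ).intervalIntegrable 0 L),
      intervalIntegral.integral_const_mul]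
  have hval : (∫ x in (0:ℝ)..L, F' t x)
      = -(2 * w t) * ∫ x in (0:ℝ)..L, pdt u x t := by
    have h0 := hFTC.trans hGL
    rw [hsplit] at h0
    linarith
  have final := hMain.const_mul (1/2 : ℝ)
  rw [hval] at final
  have : (1/2 : ℝ) * (-(2 * w t) * ∫ x in (0:ℝ)..L, pdt u x t)
      = -(w t) * ∫ x in (0:ℝ)..L, pdt u x t := by ring
  rw [this] at final
  exact final
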